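/- arXiv:2312.03648 — 3 statements merged into one kernel-verified Lean document; each statement's English description precedes it below -/
import Mathlib

section
/- Let K be a field and let V₁, V₂, W₁, W₂ be K-vector spaces with linear maps f : V₁ → W₁ and g : V₂ → W₂. Then inside V₁ ⊗ V₂ one has ker(f ⊗ id_{V₂}) ∩ ker(id_{V₁} ⊗ g) = (ker f) ⊗ (ker g), i.e. the intersection of the two kernels equals the image of the canonical map (ker f) ⊗ (ker g) → V₁ ⊗ V₂. -/
/-!
Over a field every module is flat, so tensoring the exact sequence `0 → ker f → V₁ → W₁`
with `V₂` identifies `ker (f ⊗ id)` with `ker f ⊗ V₂`, and likewise `ker (id ⊗ g)` with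
`V₁ ⊗ ker g`. Both inclusions of kernels split, and for split inclusions `ιᵢ` with
retractions `πᵢ` an element `x` of both ranges is fixed by `ιᵢ πᵢ ⊗ id` and by `id ⊗ ιᵢ πᵢ`,
hence `x = (ι₁ ⊗ ι₂) ((π₁ ⊗ π₂) x)`.
-/

open LinearMap TensorProduct

namespace Module.Flat

variable {R M N P : Type*} [CommRing R] [AddCommGroup M] [Module R M] [Module.Flat R M]
  [AddCommGroup N] [Module R N] [AddCommGroup P] [Module R P]

theorem ker_rTensor_eq_range (f : N →ₗ[R] P) :
    ker (rTensor M f) = range (rTensor M (ker f).subtype) :=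
  (rTensor_exact M f.exact_subtype_ker_map).linearMap_ker_eq

theorem ker_lTensor_eq_range (f : N →ₗ[R] P) :
    ker (lTensor M f) = range (lTensor M (ker f).subtype) :=
  (lTensor_exact M f.exact_subtype_ker_map).linearMap_ker_eq

end Module.Flat

namespace LinearMap

variable {R A₁ A₂ V₁ V₂ : Type*} [CommSemiring R]
  [AddCommMonoid A₁] [Module R A₁] [AddCommMonoid A₂] [Module R A₂]
  [AddCommMonoid V₁] [Module R V₁] [AddCommMonoid V₂] [Module R V₂]

theorem range_rTensor_inf_range_lTensor_of_comp_eq_id {ι₁ : A₁ →ₗ[R] V₁} {ι₂ : A₂ →ₗ[R] V₂}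
    {π₁ : V₁ →ₗ[R] A₁} {π₂ : V₂ →ₗ[R] A₂} (h₁ : π₁ ∘ₗ ι₁ = id) (h₂ : π₂ ∘ₗ ι₂ = id) :
    range (rTensor V₂ ι₁) ⊓ range (lTensor V₁ ι₂) = range (map ι₁ ι₂) := by
  refine le_antisymm ?_ (le_inf ?_ ?_)
  · rintro x ⟨hx₁, hx₂⟩
    have hr : rTensor V₂ (ι₁ ∘ₗ π₁) x = x := by
      obtain ⟨y, rfl⟩ := hx₁
      rw [← comp_apply, ← rTensor_comp, comp_assoc, h₁, comp_id]
    have hl : lTensor V₁ (ι₂ ∘ₗ π₂) x = x := by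
      obtain ⟨y, rfl⟩ := hx₂
      rw [← comp_apply, ← lTensor_comp, comp_assoc, h₂, comp_id]
    refine ⟨map π₁ π₂ x, ?_⟩
    rw [← comp_apply, ← map_comp, ← lTensor_comp_rTensor, comp_apply, hr, hl]
  · rw [← rTensor_comp_lTensor]
    exact range_comp_le_range _ _
  · rw [← lTensor_comp_rTensor]
    exact range_comp_le_range _ _

end LinearMap

/-- For linear maps `f : V₁ → W₁`, `g : V₂ → W₂` of vector spaces
over a field `K`, inside `V₁ ⊗ V₂` one has
`ker (f ⊗ id) ⊓ ker (id ⊗ g) = image of (ker f) ⊗ (ker g)`. -/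
theorem stmt0 (K V₁ V₂ W₁ W₂ : Type*) [Field K]
    [AddCommGroup V₁] [Module K V₁] [AddCommGroup V₂] [Module K V₂]
    [AddCommGroup W₁] [Module K W₁] [AddCommGroup W₂] [Module K W₂]
    (f : V₁ →ₗ[K] W₁) (g : V₂ →ₗ[K] W₂) :
    LinearMap.ker (LinearMap.rTensor V₂ f) ⊓ LinearMap.ker (LinearMap.lTensor V₁ g)
      = LinearMap.range
          (TensorProduct.map (LinearMap.ker f).subtype (LinearMap.ker g).subtype) := by
  obtain ⟨π₁, h₁⟩ := (ker f).subtype.exists_leftInverse_of_injective (ker f).ker_subtype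
  obtain ⟨π₂, h₂⟩ := (ker g).subtype.exists_leftInverse_of_injective (ker g).ker_subtype
  rw [Module.Flat.ker_rTensor_eq_range, Module.Flat.ker_lTensor_eq_range,
    range_rTensor_inf_range_lTensor_of_comp_eq_id h₁ h₂]
end

section
/- Let R be a commutative ℚ-algebra and let f ∈ R[[z^{±1}, w^{±1}]] satisfy (z−w)^N f = 0 for some N ∈ ℕ. Then there exist unique c_0(w), …, c_{N−1}(w) ∈ R[[w^{±1}]] such that f = Σ_{j=0}^{N−1} (1/j!) c_j(w) (∂_w)^j δ(z−w), where δ(z−w) = Σ_{n∈ℤ} z^n w^{−n−1}. -/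
/-!
Put `t = -a - 1` and `m = a + b + 1`. On each line `m = const` the coefficient of `z^a w^b` in
`(1/j!) c(w) ∂_w^j δ(z - w)` is `(t choose j) • c(m + j)`, and multiplication by `z - w` acts as
the forward difference in `t` (shifting `m` by one). So `(z - w)^N f = 0` says that every line of
coefficients of `f` is killed by `Δ^N`, and the theorem becomes Newton's forward difference
formula on `ℤ`: such a `g : ℤ → R` is `t ↦ ∑_{j<N} (t choose j) • Δ^j g 0`, with uniquely
determined coefficients.
-/

open scoped BigOperators

/-- Multiplication by `(z - w)` on doubly-infinite formal series in `z, w`. -/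
def mulZW {R : Type*} [CommRing R] (f : ℤ × ℤ → R) : ℤ × ℤ → R :=
  fun p => f (p.1 - 1, p.2) - f (p.1, p.2 - 1)

/-- Formal partial derivative `∂_w` on doubly-infinite formal series. -/
def dW {R : Type*} [CommRing R] (f : ℤ × ℤ → R) : ℤ × ℤ → R :=
  fun p => (p.2 + 1) • f (p.1, p.2 + 1)

/-- The formal delta function `δ(z - w) = Σ_{n ∈ ℤ} z^n w^{-n-1}`. -/
def deltaZW {R : Type*} [CommRing R] : ℤ × ℤ → R :=
  fun p => if p.2 = -p.1 - 1 then 1 else 0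

/-- Product of a one-variable series `c(w)` with a two-variable series `g(z,w)`:
the coefficient of `z^a w^b` is the (finite, whenever defined) convolution
`Σ_n c(b - n) g(a, n)`. -/
noncomputable def mulW {R : Type*} [CommRing R] (c : ℤ → R) (g : ℤ × ℤ → R) : ℤ × ℤ → R :=
  fun p => ∑ᶠ n : ℤ, c (p.2 - n) * g (p.1, n)

open fwdDiff

section Newton

variable {G : Type*} [AddCommGroup G]

theorem fwdDiff_sum_choose_smul {N : ℕ} (r : Fin (N + 1) → G) :
    Δ_[1] (fun t : ℤ => ∑ i : Fin (N + 1), Ring.choose t (i : ℕ) • r i) =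
      fun t => ∑ i : Fin N, Ring.choose t (i : ℕ) • r i.succ := by
  funext t
  simp only [fwdDiff, Fin.sum_univ_succ, Fin.val_zero, Ring.choose_zero_right, Fin.val_succ,
    Ring.choose_succ_succ, add_smul, Finset.sum_add_distrib]
  abel

theorem sum_choose_zero_smul {N : ℕ} (r : Fin (N + 1) → G) :
    ∑ i : Fin (N + 1), Ring.choose (0 : ℤ) (i : ℕ) • r i = r 0 := by
  simp [Fin.sum_univ_succ]

theorem eq_of_fwdDiff_eq {u v : ℤ → G} (hΔ : Δ_[1] u = Δ_[1] v) (h0 : u 0 = v 0) : u = v := by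
  have step (t : ℤ) : u (t + 1) - v (t + 1) = u t - v t := by
    have := congrFun hΔ t
    simp only [fwdDiff] at this
    rw [sub_eq_sub_iff_sub_eq_sub.mp this]
  funext t
  rw [← sub_eq_zero]
  induction t using Int.induction_on with
  | zero => rw [h0, sub_self]
  | succ n ih => rw [step, ih]
  | pred n ih => rw [← step, sub_add_cancel, ih]

theorem eq_sum_choose_smul_fwdDiff_iter (N : ℕ) {g : ℤ → G} (hg : (Δ_[1])^[N] g = 0) :
    g = fun t => ∑ i : Fin N, Ring.choose t (i : ℕ) • (Δ_[1])^[i] g 0 := by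
  induction N generalizing g with
  | zero => simpa [Pi.zero_def] using hg
  | succ N ih =>
    refine eq_of_fwdDiff_eq ?_ ?_
    · rw [fwdDiff_sum_choose_smul, ih hg]
      simp only [Fin.val_succ, Function.iterate_succ_apply]
    · rw [sum_choose_zero_smul]
      rfl

theorem sum_choose_smul_injective (N : ℕ) :
    Function.Injective fun (r : Fin N → G) (t : ℤ) =>
      ∑ i : Fin N, Ring.choose t (i : ℕ) • r i := by
  induction N with
  | zero => exact fun _ _ _ => Subsingleton.elim _ _
  | succ N ih =>
    intro r s hrs
    have h0 : r 0 = s 0 := by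
      simpa only [sum_choose_zero_smul] using congrFun hrs 0
    have hsucc : (fun i : Fin N => r i.succ) = fun i => s i.succ := by
      apply ih
      simpa only [fwdDiff_sum_choose_smul] using congrArg (Δ_[1]) hrs
    ext i
    induction i using Fin.cases with
    | zero => exact h0
    | succ i => exact congrFun hsucc i

end Newton

def diagZW {R : Type*} (f : ℤ × ℤ → R) (m : ℤ) : ℤ → R := fun t => f (-t - 1, m + t)

theorem eq_of_diagZW_eq {R : Type*} {f g : ℤ × ℤ → R} (h : ∀ m, diagZW f m = diagZW g m) :
    f = g := by
  funext ⟨a, b⟩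
  simpa [diagZW] using congrFun (h (a + b + 1)) (-a - 1)

section FormalDistribution

open Polynomial

variable {R : Type*} [CommRing R]

theorem diagZW_mulZW (f : ℤ × ℤ → R) (m : ℤ) :
    diagZW (mulZW f) m = Δ_[1] (diagZW f (m - 1)) := by
  funext t
  simp only [diagZW, mulZW, fwdDiff]
  congr 2 <;> ring_nf

theorem diagZW_mulZW_iter (k : ℕ) (f : ℤ × ℤ → R) (m : ℤ) :
    diagZW (mulZW^[k] f) m = (Δ_[1])^[k] (diagZW f (m - k)) := by
  induction k generalizing m with
  | zero => simp
  | succ k ih =>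
    rw [Function.iterate_succ_apply', diagZW_mulZW, ih, Function.iterate_succ_apply']
    congr 3
    push_cast
    ring

theorem fwdDiff_iter_diagZW_eq_zero {N : ℕ} {f : ℤ × ℤ → R} (hf : mulZW^[N] f = 0) (m : ℤ) :
    (Δ_[1])^[N] (diagZW f m) = 0 := by
  have h := diagZW_mulZW_iter N f (m + N)
  rw [hf, add_sub_cancel_right] at h
  exact h.symm

theorem dW_iter_apply (j : ℕ) (g : ℤ × ℤ → R) (a n : ℤ) :
    (dW^[j] g) (a, n) = (ascPochhammer ℤ j).eval (n + 1) • g (a, n + j) := by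
  induction j generalizing g n with
  | zero => simp
  | succ j ih =>
    rw [Function.iterate_succ_apply, ih, ascPochhammer_succ_eval, mul_smul]
    simp only [dW]
    congr 2 <;> push_cast <;> ring_nf

theorem mulW_dW_iter_deltaZW (c : ℤ → R) (j : ℕ) (a b : ℤ) :
    mulW c (dW^[j] deltaZW) (a, b) =
      (j.factorial • Ring.choose (-a - 1) j) • c (a + b + 1 + j) := by
  have h_support (n : ℤ) : (dW^[j] deltaZW) (a, n) =
      if n = -a - 1 - j then (ascPochhammer ℤ j).eval (n + 1) • (1 : R) else 0 := by
    rw [dW_iter_apply]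
    simp only [deltaZW]
    split_ifs <;> first | omega | simp
  have h_coeff :
      (ascPochhammer ℤ j).eval (-a - 1 - j + 1) = j.factorial • Ring.choose (-a - 1) j := by
    rw [← Ring.descPochhammer_eq_factorial_smul_choose, descPochhammer_smeval_eq_ascPochhammer,
      ascPochhammer_smeval_eq_eval]
  simp only [mulW]
  rw [finsum_eq_single _ (-a - 1 - j) fun n hn => by simp [h_support, hn], h_support, if_pos rfl,
    h_coeff, mul_smul_one]
  ring_nf

theorem diagZW_sum_mulW_dW_iter_deltaZW [Module ℚ R] {N : ℕ} (c : Fin N → ℤ → R) (m : ℤ) :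
    diagZW (∑ j : Fin N, ((j.1.factorial : ℚ)⁻¹) • mulW (c j) (dW^[j.1] deltaZW)) m =
      fun t => ∑ j : Fin N, Ring.choose t (j : ℕ) • c j (m + j) := by
  funext t
  simp only [diagZW, Finset.sum_apply, Pi.smul_apply, mulW_dW_iter_deltaZW]
  refine Finset.sum_congr rfl fun j _ => ?_
  rw [smul_assoc, ← Nat.cast_smul_eq_nsmul ℚ, inv_smul_smul₀ (by positivity)]
  congr 2 <;> ring

end FormalDistribution

/-- If `(z - w)^N f = 0` then there are unique one-variable series
`c_0(w), …, c_{N-1}(w)` with `f = Σ_{j<N} (1/j!) c_j(w) ∂_w^j δ(z - w)`. -/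
theorem stmt2 {R : Type*} [CommRing R] [Algebra ℚ R] (N : ℕ) (f : ℤ × ℤ → R)
    (hf : (mulZW (R := R))^[N] f = 0) :
    ∃! c : Fin N → (ℤ → R),
      f = ∑ j : Fin N,
        ((j.1.factorial : ℚ)⁻¹) • mulW (c j) ((dW (R := R))^[j.1] deltaZW) := by
  have h_newton (m : ℤ) := eq_sum_choose_smul_fwdDiff_iter N (fwdDiff_iter_diagZW_eq_zero hf m)
  refine ⟨fun j v => (Δ_[1])^[j] (diagZW f (v - j)) 0, ?_, fun c hc => ?_⟩
  · refine eq_of_diagZW_eq fun m => ?_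
    rw [diagZW_sum_mulW_dW_iter_deltaZW, h_newton m]
    simp only [add_sub_cancel_right]
  · funext j v
    have h_diag := diagZW_sum_mulW_dW_iter_deltaZW c (v - j)
    rw [← hc] at h_diag
    have h_coeff := sum_choose_smul_injective N (h_diag.symm.trans (h_newton (v - j)))
    simpa using congrFun h_coeff j
end

section
/- Let K be a field of characteristic 0, k ∈ K nonzero, λ ∈ K, and let F = K[b_{−1}, b_{−2}, …] be the Fock module of the rank-1 Heisenberg algebra at level k, on which b_{−n} (n > 0) acts by multiplication, b_n (n > 0) acts as n k ∂/∂b_{−n}, and b₀ acts by 0. Define operators L_n = (1/(2k)) Σ_{j∈ℤ} :b_{n−j} b_j: − λ (n+1) b_n for n ∈ ℤ, where :b_i b_j: puts the annihilation operator (larger index) to the right. Then the L_n are well-defined on F and satisfy the Virasoro relations [L_m, L_n] = (m−n) L_{m+n} + ((m³−m)/12) δ_{m+n,0} c · id with central charge c = 1 − 12 k λ². -/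
open scoped BigOperators

/-- The Fock module `F = K[b_{−1}, b_{−2}, …]` of the rank-1 Heisenberg algebra:
a polynomial ring with one variable for each positive integer (the variable
indexed by `n > 0` representing `b_{−n}`). -/
abbrev Fock (K : Type*) [Field K] := MvPolynomial {n : ℕ // 0 < n} K

/-- The action of the Heisenberg mode `b_m` on the Fock module at level `k`:
for `m < 0`, multiplication by the variable `b_m`; for `m > 0`, the operator
`m k ∂/∂b_{−m}`; and `b₀` acts by `0`. -/
noncomputable def Bop (K : Type*) [Field K] (k : K) (m : ℤ) : Module.End K (Fock K) :=
  if h : m < 0 then LinearMap.mulLeft K (MvPolynomial.X ⟨(-m).toNat, by omega⟩)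
  else if h' : 0 < m then
    ((m : K) * k) • (MvPolynomial.pderiv (⟨m.toNat, by omega⟩ : {n : ℕ // 0 < n})).toLinearMap
  else 0

/-- The normally ordered product `:b_i b_j:`, with the annihilation operator
(larger index) to the right. -/
noncomputable def NOp (K : Type*) [Field K] (k : K) (i j : ℤ) : Module.End K (Fock K) :=
  if i ≤ j then Bop K k i * Bop K k j else Bop K k j * Bop K k i

/-- The Virasoro operator `L_n = (1/(2k)) Σ_{j∈ℤ} :b_{n−j} b_j: − λ(n+1) b_n` on the
Fock module; applied to any vector, only finitely many summands are nonzero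
(recorded via `finsum`). -/
noncomputable def Lop (K : Type*) [Field K] (k lam : K) (n : ℤ) (v : Fock K) : Fock K :=
  (1 / (2 * k)) • (∑ᶠ j : ℤ, NOp K k (n - j) j v) - (lam * ((n : K) + 1)) • Bop K k n v

/-!
The modes satisfy the Heisenberg relations `[b_i, b_j] = i k δ_{i+j,0}`. On a given vector,
`L_m` agrees with every sufficiently large finite truncation of its defining sum; hence `L_m` is
linear, and commuting the truncations past `b_j` gives
`[L_m, b_j] = -j b_{m+j} - λ k m (m+1) δ_{m+j,0}`. By the Jacobi identity the defect
`[L_m, L_n] - (m - n) L_{m+n} - (m³ - m)/12 · c δ_{m+n,0}` therefore commutes with every `b_j`.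
An operator `T` with this property is multiplication by the constant term of `T 1` (the partial
derivatives of `T 1` vanish, and `F` is generated from `1` by the creation operators), so it
remains to see that the defect applied to `1` has no constant term. This is a vacuum
computation: `L_n 1 = 0` for `n ≥ 0`, `L_m v` has no constant term for `m ≤ 0`, and for `m > 0`
the constant term of `L_m L_{-m} 1` is
`(1/2k) Σ_{0<j<m} (m-j) j k - λ² k (m+1) m (m-1) = (m³ - m)/12 · (1 - 12 k λ²)`.
-/

open MvPolynomial Filter

attribute [local instance] LieRing.ofAssociativeRing

theorem MvPolynomial.pderiv_comm {σ R : Type*} [CommSemiring R] (i j : σ)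
    (p : MvPolynomial σ R) :
    pderiv i (pderiv j p) = pderiv j (pderiv i p) := by
  classical
  induction p using MvPolynomial.induction_on with
  | C c => simp
  | add p q hp hq => simp [hp, hq]
  | mul_X p a hp =>
    simp only [pderiv_mul, map_add, hp]
    by_cases hia : i = a <;> by_cases hja : j = a <;> simp [pderiv_X, hia, hja]

theorem MvPolynomial.ext_pderiv {σ R : Type*} [CommRing R] [IsAddTorsionFree R]
    {f g : MvPolynomial σ R} (hD : ∀ i, pderiv i f = pderiv i g)
    (hc : constantCoeff f = constantCoeff g) : f = g := by
  refine coe_injective σ R (MvPowerSeries.pderiv.ext (fun i => ?_) ?_)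
  · rw [MvPowerSeries.pderiv_coe, MvPowerSeries.pderiv_coe, hD]
  · simpa [← MvPowerSeries.coeff_zero_eq_constantCoeff_apply, coeff_coe,
      ← constantCoeff_eq] using hc

theorem Module.End.commutator_apply {R M : Type*} [Semiring R] [AddCommGroup M] [Module R M]
    (f g : Module.End R M) (v : M) : ⁅f, g⁆ v = f (g v) - g (f v) :=
  rfl

-- The generic `smul_lie` and `lie_smul` do not rewrite on `Module.End`: their instance paths to
-- `•` and `⁅·, ·⁆` differ syntactically from the ones elaborated here.
theorem Module.End.smul_lie {R M : Type*} [CommRing R] [AddCommGroup M] [Module R M] (c : R)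
    (f g : Module.End R M) : ⁅c • f, g⁆ = c • ⁅f, g⁆ :=
  _root_.smul_lie c f g

theorem Module.End.lie_smul {R M : Type*} [CommRing R] [AddCommGroup M] [Module R M] (c : R)
    (f g : Module.End R M) : ⁅f, c • g⁆ = c • ⁅f, g⁆ :=
  _root_.lie_smul c f g

theorem Ring.mul_lie {A : Type*} [Ring A] (x y z : A) :
    ⁅x * y, z⁆ = x * ⁅y, z⁆ + ⁅x, z⁆ * y := by
  simp only [Ring.lie_def]
  noncomm_ring

section Sums

variable {R : Type*} [CommRing R]

lemma two_mul_sum_Ico_intCast {m : ℤ} (hm : 0 ≤ m) :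
    2 * ∑ j ∈ Finset.Ico 0 m, (j : R) = m * (m - 1) := by
  induction m, hm using Int.leInduction with
  | base => simp
  | succ m hm ih =>
    rw [Finset.Ico_add_one_right_eq_Icc, ← Finset.Ico_insert_right hm,
      Finset.sum_insert Finset.right_notMem_Ico, mul_add, ih]
    push_cast
    ring

lemma six_mul_sum_Ico_sub_mul {m : ℤ} (hm : 0 ≤ m) :
    6 * ∑ j ∈ Finset.Ico 0 m, ((m : R) - j) * j = (m : R) ^ 3 - m := by
  induction m, hm using Int.leInduction with
  | base => simp
  | succ m hm ih =>
    have hsplit : ∀ j : ℤ, (((m + 1 : ℤ) : R) - j) * j = ((m : R) - j) * j + j := fun j => by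
      push_cast
      ring
    rw [Finset.Ico_add_one_right_eq_Icc, ← Finset.Ico_insert_right hm,
      Finset.sum_insert Finset.right_notMem_Ico]
    simp_rw [hsplit]
    rw [Finset.sum_add_distrib]
    push_cast
    linear_combination ih + 3 * two_mul_sum_Ico_intCast (R := R) hm

end Sums

section Heisenberg

variable {K : Type*} [Field K] (k : K)

lemma Bop_apply_of_neg {m : ℤ} (hm : m < 0) (v : Fock K) :
    Bop K k m v = X ⟨(-m).toNat, by omega⟩ * v := by
  simp [Bop, hm]

lemma Bop_apply_of_pos {m : ℤ} (hm : 0 < m) (v : Fock K) :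
    Bop K k m v = ((m : K) * k) • pderiv ⟨m.toNat, by omega⟩ v := by
  simp [Bop, hm, not_lt.2 hm.le]

@[simp]
lemma Bop_zero : Bop K k 0 = 0 := by
  simp [Bop]

lemma Bop_one_of_nonneg {m : ℤ} (hm : 0 ≤ m) : Bop K k m 1 = 0 := by
  rcases hm.lt_or_eq with hm | rfl
  · simp [Bop_apply_of_pos k hm]
  · simp

lemma constantCoeff_Bop_of_nonpos {m : ℤ} (hm : m ≤ 0) (v : Fock K) :
    constantCoeff (Bop K k m v) = 0 := by
  rcases hm.lt_or_eq with hm | rfl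
  · simp [Bop_apply_of_neg k hm]
  · simp

lemma constantCoeff_Bop_one (m : ℤ) : constantCoeff (Bop K k m 1) = 0 := by
  rcases le_total m 0 with hm | hm
  · exact constantCoeff_Bop_of_nonpos k hm 1
  · simp [Bop_one_of_nonneg k hm]

lemma lie_Bop_Bop_of_nonneg {i j : ℤ} (hi : 0 ≤ i) (hj : 0 ≤ j) :
    ⁅Bop K k i, Bop K k j⁆ = 0 := by
  rcases hi.lt_or_eq with hi | rfl
  · rcases hj.lt_or_eq with hj | rfl
    · refine LinearMap.ext fun v => ?_
      simp [Bop_apply_of_pos k hi, Bop_apply_of_pos k hj, pderiv_comm]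
    · exact lie_zero _
  · exact zero_lie _

lemma lie_Bop_Bop_of_nonpos {i j : ℤ} (hi : i ≤ 0) (hj : j ≤ 0) :
    ⁅Bop K k i, Bop K k j⁆ = 0 := by
  rcases hi.lt_or_eq with hi | rfl
  · rcases hj.lt_or_eq with hj | rfl
    · refine LinearMap.ext fun v => ?_
      simp only [Module.End.commutator_apply, Bop_apply_of_neg k hi, Bop_apply_of_neg k hj,
        LinearMap.zero_apply]
      ring
    · exact lie_zero _
  · exact zero_lie _

lemma lie_Bop_Bop_of_neg_of_pos {i j : ℤ} (hi : i < 0) (hj : 0 < j) :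
    ⁅Bop K k i, Bop K k j⁆ = (if i + j = 0 then (i : K) * k else 0) • 1 := by
  refine LinearMap.ext fun v => ?_
  simp only [Module.End.commutator_apply, Bop_apply_of_neg k hi, Bop_apply_of_pos k hj,
    pderiv_mul, pderiv_X, LinearMap.smul_apply, Module.End.one_apply]
  split_ifs with hij
  · have hidx : (⟨(-i).toNat, by omega⟩ : {n : ℕ // 0 < n}) = ⟨j.toNat, by omega⟩ :=
      Subtype.ext (by simp only; omega)
    have hcast : (i : K) = -j :=
      eq_neg_of_add_eq_zero_left (by rw [← Int.cast_add, hij, Int.cast_zero])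
    rw [hidx, Pi.single_eq_same, mul_smul_comm, hcast, one_mul]
    module
  · have hidx : (⟨(-i).toNat, by omega⟩ : {n : ℕ // 0 < n}) ≠ ⟨j.toNat, by omega⟩ := by
      intro h
      have := congrArg Subtype.val h
      simp only at this
      omega
    rw [Pi.single_eq_of_ne hidx, mul_smul_comm, zero_mul, zero_add]
    module

theorem lie_Bop_Bop (i j : ℤ) :
    ⁅Bop K k i, Bop K k j⁆ = (if i + j = 0 then (i : K) * k else 0) • 1 := by
  rcases le_or_gt i 0 with hi | hi <;> rcases le_or_gt j 0 with hj | hj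
  · rw [lie_Bop_Bop_of_nonpos k hi hj]
    split_ifs with h
    · obtain rfl : i = 0 := by omega
      simp
    · simp
  · rcases hi.lt_or_eq with hi | rfl
    · exact lie_Bop_Bop_of_neg_of_pos k hi hj
    · simp
  · rcases hj.lt_or_eq with hj | rfl
    · rw [← lie_skew, lie_Bop_Bop_of_neg_of_pos k hj hi, add_comm j]
      split_ifs with h
      · have hcast : (j : K) = -i :=
          eq_neg_of_add_eq_zero_right (by rw [← Int.cast_add, h, Int.cast_zero])
        rw [hcast]
        module
      · simp
    · simp [hi.ne']
  · rw [lie_Bop_Bop_of_nonneg k hi.le hj.le, if_neg (by omega), zero_smul]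

end Heisenberg

section Schur

variable {K : Type*} [Field K] [CharZero K] (k : K)

theorem eq_smul_one_of_lie_Bop_eq_zero (hk : k ≠ 0) (T : Module.End K (Fock K))
    (hT : ∀ j, ⁅T, Bop K k j⁆ = 0) : T = constantCoeff (T 1) • 1 := by
  have hcomm : ∀ j v, T (Bop K k j v) = Bop K k j (T v) := fun j v => by
    simpa [Module.End.commutator_apply, sub_eq_zero] using congr($(hT j) v)
  have hvac : T 1 = C (constantCoeff (T 1)) := by
    refine ext_pderiv (fun a => ?_) (by simp)
    have ha : (0 : ℤ) < a := by exact_mod_cast a.2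
    have h := hcomm a 1
    rw [Bop_one_of_nonneg k ha.le, map_zero, Bop_apply_of_pos k ha] at h
    simp only [Int.toNat_natCast, Subtype.coe_eta] at h
    simpa [hk, a.2.ne'] using h.symm
  refine LinearMap.ext fun p => ?_
  induction p using MvPolynomial.induction_on with
  | C c =>
    rw [← mul_one (C c), ← smul_eq_C_mul, map_smul, hvac]
    simp [smul_eq_C_mul, mul_comm]
  | add p q hp hq => simp [hp, hq]
  | mul_X p a hp =>
    have ha : (0 : ℤ) < a := by exact_mod_cast a.2
    have hX : ∀ v : Fock K, v * X a = Bop K k (-a) v := fun v => by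
      rw [Bop_apply_of_neg k (by omega), mul_comm]
      simp
    rw [hX, hcomm, hp, LinearMap.smul_apply, Module.End.one_apply, map_smul, ← hX]
    simp

end Schur

section NormalOrder

variable {K : Type*} [Field K] (k : K)

lemma NOp_of_nonneg {i l : ℤ} (hi : 0 ≤ i) (hl : 0 ≤ l) :
    NOp K k i l = Bop K k i * Bop K k l := by
  rw [NOp]
  split_ifs
  · rfl
  · exact (commute_iff_lie_eq.2 (lie_Bop_Bop_of_nonneg k hl hi)).eq

lemma lie_Bop_mul_Bop_Bop (a b j : ℤ) :
    ⁅Bop K k a * Bop K k b, Bop K k j⁆ =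
      (if b + j = 0 then (b : K) * k else 0) • Bop K k a
        + (if a + j = 0 then (a : K) * k else 0) • Bop K k b := by
  rw [Ring.mul_lie, lie_Bop_Bop, lie_Bop_Bop, mul_smul_comm, mul_one, smul_mul_assoc, one_mul]

lemma lie_NOp_Bop (i l j : ℤ) :
    ⁅NOp K k i l, Bop K k j⁆ =
      (if l + j = 0 then (l : K) * k else 0) • Bop K k i
        + (if i + j = 0 then (i : K) * k else 0) • Bop K k l := by
  by_cases h : i ≤ l
  · rw [NOp, if_pos h, lie_Bop_mul_Bop_Bop]
  · rw [NOp, if_neg h, lie_Bop_mul_Bop_Bop, add_comm]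

lemma sum_lie_NOp_Bop {s : Finset ℤ} {m j : ℤ} (h₁ : -j ∈ s) (h₂ : m + j ∈ s) :
    ∑ l ∈ s, ⁅NOp K k (m - l) l, Bop K k j⁆ = (2 * (-(j : K) * k)) • Bop K k (m + j) := by
  simp_rw [lie_NOp_Bop, ite_smul, zero_smul, Finset.sum_add_distrib, add_eq_zero_iff_eq_neg,
    show ∀ l, (m - l = -j ↔ l = m + j) from fun l => by omega, Finset.sum_ite_eq', if_pos h₁,
    if_pos h₂, sub_neg_eq_add]
  push_cast
  module

lemma exists_Bop_eq_zero (v : Fock K) : ∃ N : ℤ, ∀ j, N < j → Bop K k j v = 0 := by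
  refine ⟨(v.vars.sup fun a => (a : ℕ) : ℕ), fun j hj => ?_⟩
  rw [Bop_apply_of_pos k (by omega), pderiv_eq_zero_of_notMem_vars, smul_zero]
  intro hmem
  have := Finset.le_sup (f := fun a : {n : ℕ // 0 < n} => (a : ℕ)) hmem
  simp only at this
  omega

lemma NOp_apply_eq_zero_of_lt_max {v : Fock K} {N : ℤ} (hN : ∀ j, N < j → Bop K k j v = 0)
    {i l : ℤ} (h : N < max i l) : NOp K k i l v = 0 := by
  rw [NOp]
  split_ifs
  · simp [hN l (by omega)]
  · simp [hN i (by omega)]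

end NormalOrder

section Truncation

variable {K : Type*} [Field K] (k lam : K)

noncomputable def truncLop (s : Finset ℤ) (n : ℤ) : Module.End K (Fock K) :=
  (1 / (2 * k)) • ∑ j ∈ s, NOp K k (n - j) j - (lam * ((n : K) + 1)) • Bop K k n

lemma truncLop_apply (s : Finset ℤ) (n : ℤ) (v : Fock K) :
    truncLop k lam s n v =
      (1 / (2 * k)) • ∑ j ∈ s, NOp K k (n - j) j v
        - (lam * ((n : K) + 1)) • Bop K k n v := by
  simp [truncLop]

lemma eventually_Lop_eq_truncLop (n : ℤ) (v : Fock K) :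
    ∀ᶠ s in atTop, Lop K k lam n v = truncLop k lam s n v := by
  obtain ⟨N, hN⟩ := exists_Bop_eq_zero k v
  filter_upwards [eventually_ge_atTop (Finset.Icc (n - N) N)] with s hs
  rw [Lop, finsum_eq_sum_of_support_subset _ (subset_trans ?_ (Finset.coe_subset.2 hs))]
  · rw [truncLop_apply]
  · intro j hj
    by_contra h
    simp only [Finset.coe_Icc, Set.mem_Icc, not_and_or, not_le] at h
    exact hj (NOp_apply_eq_zero_of_lt_max k hN (by omega))

theorem isLinearMap_Lop (n : ℤ) : IsLinearMap K (Lop K k lam n) where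
  map_add v w := by
    obtain ⟨s, hvw, hv, hw⟩ := ((eventually_Lop_eq_truncLop k lam n (v + w)).and
      ((eventually_Lop_eq_truncLop k lam n v).and (eventually_Lop_eq_truncLop k lam n w))).exists
    rw [hvw, hv, hw, map_add]
  map_smul c v := by
    obtain ⟨s, hcv, hv⟩ := ((eventually_Lop_eq_truncLop k lam n (c • v)).and
      (eventually_Lop_eq_truncLop k lam n v)).exists
    rw [hcv, hv, map_smul]

noncomputable def LopEnd (n : ℤ) : Module.End K (Fock K) :=
  IsLinearMap.mk' _ (isLinearMap_Lop k lam n)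

@[simp]
lemma LopEnd_apply (n : ℤ) (v : Fock K) : LopEnd k lam n v = Lop K k lam n v :=
  rfl

end Truncation

section Commutator

variable {K : Type*} [Field K] [NeZero (2 : K)] (k lam : K)

lemma lie_truncLop_Bop (hk : k ≠ 0) {s : Finset ℤ} {m j : ℤ} (h₁ : -j ∈ s)
    (h₂ : m + j ∈ s) :
    ⁅truncLop k lam s m, Bop K k j⁆ =
      (-(j : K)) • Bop K k (m + j)
        - (if m + j = 0 then lam * k * (m * (m + 1)) else 0) • 1 := by
  rw [truncLop, sub_lie, Module.End.smul_lie, Module.End.smul_lie, sum_lie,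
    sum_lie_NOp_Bop k h₁ h₂, lie_Bop_Bop, smul_smul, smul_smul]
  congr 2
  · field_simp
  · split_ifs <;> ring

theorem lie_LopEnd_Bop (hk : k ≠ 0) (m j : ℤ) :
    ⁅LopEnd k lam m, Bop K k j⁆ =
      (-(j : K)) • Bop K k (m + j)
        - (if m + j = 0 then lam * k * (m * (m + 1)) else 0) • 1 := by
  refine LinearMap.ext fun v => ?_
  obtain ⟨s, hjv, hv, hs⟩ := ((eventually_Lop_eq_truncLop k lam m (Bop K k j v)).and
    ((eventually_Lop_eq_truncLop k lam m v).and (eventually_ge_atTop {-j, m + j}))).exists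
  rw [Module.End.commutator_apply, LopEnd_apply, LopEnd_apply, hjv, hv,
    ← Module.End.commutator_apply, lie_truncLop_Bop k lam hk (hs (by simp)) (hs (by simp))]

end Commutator

section Vacuum

variable {K : Type*} [Field K] (k lam : K)

lemma NOp_one_of_nonneg {i l : ℤ} (h : 0 ≤ max i l) : NOp K k i l 1 = 0 := by
  rw [NOp]
  split_ifs
  · simp [Bop_one_of_nonneg k (by omega : 0 ≤ l)]
  · simp [Bop_one_of_nonneg k (by omega : 0 ≤ i)]

lemma constantCoeff_NOp_of_nonpos {i l : ℤ} (h : min i l ≤ 0) (v : Fock K) :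
    constantCoeff (NOp K k i l v) = 0 := by
  rw [NOp]
  split_ifs
  · exact constantCoeff_Bop_of_nonpos k (by omega) _
  · exact constantCoeff_Bop_of_nonpos k (by omega) _

lemma Lop_one_of_nonneg {n : ℤ} (hn : 0 ≤ n) : Lop K k lam n 1 = 0 := by
  obtain ⟨s, hs⟩ := (eventually_Lop_eq_truncLop k lam n 1).exists
  rw [hs, truncLop_apply, Finset.sum_eq_zero fun j _ => NOp_one_of_nonneg k (by omega),
    Bop_one_of_nonneg k hn]
  simp

lemma constantCoeff_Lop_of_nonpos {m : ℤ} (hm : m ≤ 0) (v : Fock K) :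
    constantCoeff (Lop K k lam m v) = 0 := by
  obtain ⟨s, hs⟩ := (eventually_Lop_eq_truncLop k lam m v).exists
  rw [hs, truncLop_apply, map_sub, constantCoeff_smul, constantCoeff_smul,
    map_sum, Finset.sum_eq_zero fun j _ => constantCoeff_NOp_of_nonpos k (by omega) v,
    constantCoeff_Bop_of_nonpos k hm]
  simp

lemma constantCoeff_Lop_one (n : ℤ) : constantCoeff (Lop K k lam n 1) = 0 := by
  rcases le_total n 0 with hn | hn
  · exact constantCoeff_Lop_of_nonpos k lam hn 1
  · rw [Lop_one_of_nonneg k lam hn, map_zero]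

variable [NeZero (2 : K)]

lemma Bop_Lop_one (hk : k ≠ 0) {l : ℤ} (hl : 0 ≤ l) (n : ℤ) :
    Bop K k l (Lop K k lam n 1) =
      (l : K) • Bop K k (n + l) 1 + (if n + l = 0 then lam * k * (n * (n + 1)) else 0) • 1 := by
  have h := congr($(lie_LopEnd_Bop k lam hk n l) 1)
  rw [Module.End.commutator_apply, Bop_one_of_nonneg k hl, map_zero, LopEnd_apply,
    LinearMap.sub_apply, LinearMap.smul_apply, LinearMap.smul_apply, Module.End.one_apply] at h
  linear_combination (norm := module) -h

lemma Bop_Bop_Lop_one (hk : k ≠ 0) {i l : ℤ} (hi : 0 ≤ i) (hl : 0 ≤ l) (n : ℤ) :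
    Bop K k i (Bop K k l (Lop K k lam n 1)) =
      (if i + l + n = 0 then (i : K) * l * k else 0) • 1 := by
  have h := congr($(lie_Bop_Bop k i (n + l)) 1)
  rw [Module.End.commutator_apply, Bop_one_of_nonneg k hi, map_zero, sub_zero,
    LinearMap.smul_apply, Module.End.one_apply] at h
  rw [Bop_Lop_one k lam hk hl, map_add, map_smul, map_smul, Bop_one_of_nonneg k hi, smul_zero,
    add_zero, h, smul_smul, show i + (n + l) = i + l + n by ring]
  split_ifs
  · ring_nf
  · simp

lemma constantCoeff_Bop_Lop_one (hk : k ≠ 0) {l : ℤ} (hl : 0 ≤ l) (n : ℤ) :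
    constantCoeff (Bop K k l (Lop K k lam n 1)) =
      if n + l = 0 then lam * k * (n * (n + 1)) else 0 := by
  rw [Bop_Lop_one k lam hk hl]
  split_ifs <;> simp [constantCoeff_Bop_one]

end Vacuum

section Cocycle

variable {K : Type*} [Field K]

def virasoroCocycle (c : K) (m : ℤ) : K :=
  ((m : K) ^ 3 - m) / 12 * c

lemma virasoroCocycle_neg (c : K) (m : ℤ) : virasoroCocycle c (-m) = -virasoroCocycle c m := by
  simp only [virasoroCocycle]
  push_cast
  ring

lemma virasoroCocycle_zero (c : K) : virasoroCocycle c 0 = 0 := by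
  simp [virasoroCocycle]

end Cocycle

section VacuumExpectation

variable {K : Type*} [Field K] [CharZero K] (k lam : K)

lemma constantCoeff_Lop_Lop_one (hk : k ≠ 0) {m : ℤ} (hm : 0 < m) (n : ℤ) :
    constantCoeff (Lop K k lam m (Lop K k lam n 1)) =
      if m + n = 0 then virasoroCocycle (1 - 12 * k * lam ^ 2) m else 0 := by
  obtain ⟨s, hq, hs⟩ := ((eventually_Lop_eq_truncLop k lam m (Lop K k lam n 1)).and
    (eventually_ge_atTop (Finset.Ico 0 m))).exists
  have hterm : ∀ j ∈ s, constantCoeff (NOp K k (m - j) j (Lop K k lam n 1)) =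
      if j ∈ Finset.Ico 0 m then (if m + n = 0 then ((m : K) - j) * j * k else 0) else 0 := by
    intro j _
    split_ifs with hj hmn
    · rw [Finset.mem_Ico] at hj
      rw [NOp_of_nonneg k (by omega) hj.1, Module.End.mul_apply,
        Bop_Bop_Lop_one k lam hk (by omega) hj.1, if_pos (by omega)]
      simp
    · rw [Finset.mem_Ico] at hj
      rw [NOp_of_nonneg k (by omega) hj.1, Module.End.mul_apply,
        Bop_Bop_Lop_one k lam hk (by omega) hj.1, if_neg (by omega)]
      simp
    · rw [Finset.mem_Ico] at hj
      exact constantCoeff_NOp_of_nonpos k (by omega) _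
  rw [hq, truncLop_apply, map_sub, constantCoeff_smul, constantCoeff_smul, map_sum,
    Finset.sum_congr rfl hterm, Finset.sum_ite_mem, Finset.inter_eq_right.2 hs,
    constantCoeff_Bop_Lop_one k lam hk hm.le, add_comm n m]
  split_ifs with hmn
  · obtain rfl : n = -m := by omega
    have hsum := six_mul_sum_Ico_sub_mul (R := K) hm.le
    rw [← Finset.sum_mul, virasoroCocycle, smul_eq_mul, smul_eq_mul]
    generalize ∑ j ∈ Finset.Ico 0 m, ((m : K) - j) * j = S at hsum ⊢
    push_cast
    field_simp
    linear_combination 2 * hsum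
  · simp

lemma constantCoeff_Lop_Lop_one_sub (hk : k ≠ 0) (m n : ℤ) :
    constantCoeff (Lop K k lam m (Lop K k lam n 1) - Lop K k lam n (Lop K k lam m 1)) =
      if m + n = 0 then virasoroCocycle (1 - 12 * k * lam ^ 2) m else 0 := by
  rw [map_sub]
  rcases lt_or_ge 0 m with hm | hm
  · rw [constantCoeff_Lop_Lop_one k lam hk hm, Lop_one_of_nonneg k lam hm.le,
      (isLinearMap_Lop k lam n).map_zero, map_zero, sub_zero]
  rw [constantCoeff_Lop_of_nonpos k lam hm, zero_sub]
  rcases lt_or_ge 0 n with hn | hn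
  · rw [constantCoeff_Lop_Lop_one k lam hk hn, add_comm n m]
    split_ifs with h
    · rw [show n = -m by omega, virasoroCocycle_neg, neg_neg]
    · rw [neg_zero]
  · rw [constantCoeff_Lop_of_nonpos k lam hn, neg_zero]
    split_ifs with h
    · rw [show m = 0 by omega, virasoroCocycle_zero]
    · rfl

end VacuumExpectation

section Virasoro

variable {K : Type*} [Field K] (k lam : K)

noncomputable def virasoroDefect (m n : ℤ) : Module.End K (Fock K) :=
  ⁅LopEnd k lam m, LopEnd k lam n⁆ - ((m : K) - n) • LopEnd k lam (m + n)
    - (if m + n = 0 then virasoroCocycle (1 - 12 * k * lam ^ 2) m else 0) • 1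

lemma lie_virasoroDefect_Bop [NeZero (2 : K)] (hk : k ≠ 0) (m n j : ℤ) :
    ⁅virasoroDefect k lam m n, Bop K k j⁆ = 0 := by
  have lie_one : ∀ f : Module.End K (Fock K), ⁅f, (1 : Module.End K (Fock K))⁆ = 0 :=
    fun f => commute_iff_lie_eq.1 (Commute.one_right f)
  rw [virasoroDefect, sub_lie, sub_lie, lie_lie, Module.End.smul_lie, Module.End.smul_lie,
    ← lie_skew 1, lie_one, lie_LopEnd_Bop k lam hk n j, lie_LopEnd_Bop k lam hk m j,
    lie_LopEnd_Bop k lam hk (m + n) j, lie_sub, lie_sub, Module.End.lie_smul,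
    Module.End.lie_smul, Module.End.lie_smul, Module.End.lie_smul, lie_one, lie_one,
    lie_LopEnd_Bop k lam hk m (n + j), lie_LopEnd_Bop k lam hk n (m + j),
    show m + (n + j) = m + n + j by ring, show n + (m + j) = m + n + j by ring]
  by_cases h : m + n + j = 0
  · obtain rfl : j = -(m + n) := by omega
    simp only [if_pos h]
    push_cast
    module
  · simp only [if_neg h]
    push_cast
    module

variable [CharZero K]

lemma constantCoeff_virasoroDefect_one (hk : k ≠ 0) (m n : ℤ) :
    constantCoeff (virasoroDefect k lam m n 1) = 0 := by
  rw [virasoroDefect, LinearMap.sub_apply, LinearMap.sub_apply, Module.End.commutator_apply,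
    LopEnd_apply, LopEnd_apply, LopEnd_apply, LopEnd_apply, LinearMap.smul_apply,
    LinearMap.smul_apply, LopEnd_apply, Module.End.one_apply, map_sub, map_sub,
    constantCoeff_Lop_Lop_one_sub k lam hk, constantCoeff_smul, constantCoeff_smul,
    constantCoeff_Lop_one, map_one]
  ring

theorem lie_LopEnd_LopEnd (hk : k ≠ 0) (m n : ℤ) :
    ⁅LopEnd k lam m, LopEnd k lam n⁆ =
      ((m : K) - n) • LopEnd k lam (m + n)
        + (if m + n = 0 then virasoroCocycle (1 - 12 * k * lam ^ 2) m else 0) • 1 := by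
  have h := eq_smul_one_of_lie_Bop_eq_zero k hk _ (lie_virasoroDefect_Bop k lam hk m n)
  rwa [constantCoeff_virasoroDefect_one k lam hk, zero_smul, virasoroDefect, sub_eq_zero,
    sub_eq_iff_eq_add'] at h

end Virasoro

/-- The operators `L_n` are well defined (linear) on the Fock
module and satisfy the Virasoro relations
`[L_m, L_n] = (m − n) L_{m+n} + ((m³ − m)/12) δ_{m+n,0} c · id` with central
charge `c = 1 − 12 k λ²`. -/
theorem stmt16 (K : Type*) [Field K] [CharZero K] (k lam : K) (hk : k ≠ 0) :
    (∀ n : ℤ, IsLinearMap K (Lop K k lam n)) ∧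
    (∀ (m n : ℤ) (v : Fock K),
      Lop K k lam m (Lop K k lam n v) - Lop K k lam n (Lop K k lam m v)
        = ((m : K) - (n : K)) • Lop K k lam (m + n) v
          + (if m + n = 0 then (((m : K) ^ 3 - (m : K)) / 12) * (1 - 12 * k * lam ^ 2)
              else 0) • v) :=
  ⟨isLinearMap_Lop k lam, fun m n v => congr($(lie_LopEnd_LopEnd k lam hk m n) v)⟩
end
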